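/- arXiv:2009.01044 — 2 statements merged into one kernel-verified Lean document; each statement's English description precedes it below -/
import Mathlib

section
/- Let G be a finite group and let N be a normal subgroup of G. Then LC(N) is contained in Fit(G). -/
/-- `lcmFull G = LCM(G)`: the set of all `x ∈ G` such that `o(xⁿ z)` divides
`lcm(o(xⁿ), o(z))` for all `z ∈ G` and all integers `n`. -/
def lcmFull (G : Type*) [Group G] : Set G :=
  {x : G | ∀ z : G, ∀ n : ℤ, orderOf (x ^ n * z) ∣ Nat.lcm (orderOf (x ^ n)) (orderOf z)}

/-- `LC G`: the subgroup generated by `LCM(G)`. -/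
def LC (G : Type*) [Group G] : Subgroup G := Subgroup.closure (lcmFull G)

/-- The Fitting subgroup: the join of all nilpotent normal subgroups; for a finite
group this is the largest nilpotent normal subgroup. -/
def fittingSubgroup (G : Type*) [Group G] : Subgroup G :=
  ⨆ (H : Subgroup G) (_ : H.Normal) (_ : Group.IsNilpotent H), H

section Aux

variable {G : Type*} [Group G]

/-- Integer powers of elements of `lcmFull` stay in `lcmFull`. -/
lemma lcmFull_zpow {x : G} (hx : x ∈ lcmFull G) (m : ℤ) : x ^ m ∈ lcmFull G := by
  intro z n
  rw [← zpow_mul]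
  exact hx z (m * n)

lemma lcmFull_inv {x : G} (hx : x ∈ lcmFull G) : x⁻¹ ∈ lcmFull G := by
  simpa using lcmFull_zpow hx (-1)

lemma orderOf_mulEquiv {H : Type*} [Group H] (e : G ≃* H) (x : G) :
    orderOf (e x) = orderOf x :=
  orderOf_injective e.toMonoidHom e.injective x

/-- `lcmFull` is invariant under group isomorphisms. -/
lemma lcmFull_mulEquiv {H : Type*} [Group H] (e : G ≃* H) {x : G} (hx : x ∈ lcmFull G) :
    e x ∈ lcmFull H := by
  intro z n
  have h := hx (e.symm z) n
  have h1 : (e x) ^ n * z = e (x ^ n * e.symm z) := by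
    rw [map_mul, map_zpow, MulEquiv.apply_symm_apply]
  rw [h1, orderOf_mulEquiv, ← map_zpow, orderOf_mulEquiv, ← MulEquiv.apply_symm_apply e z,
    orderOf_mulEquiv, MulEquiv.apply_symm_apply]
  exact h

/-- Products of `p`-elements of `lcmFull` are `p`-elements. -/
lemma list_prod_ppow {p : ℕ} (hp : p.Prime) (l : List G)
    (hl : ∀ g ∈ l, g ∈ lcmFull G ∧ ∃ j, orderOf g = p ^ j) :
    ∃ j, orderOf l.prod = p ^ j := by
  induction l with
  | nil => exact ⟨0, by simp⟩
  | cons a l ih =>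
    obtain ⟨ha, ja, hja⟩ := hl a (by simp)
    obtain ⟨jl, hjl⟩ := ih fun g hg => hl g (by simp [hg])
    have h := ha l.prod 1
    rw [zpow_one] at h
    rw [List.prod_cons]
    have hdvd : orderOf (a * l.prod) ∣ p ^ max ja jl := by
      refine h.trans (Nat.lcm_dvd ?_ ?_)
      · rw [hja]; exact pow_dvd_pow p (le_max_left _ _)
      · rw [hjl]; exact pow_dvd_pow p (le_max_right _ _)
    obtain ⟨j, _, hj⟩ := (Nat.dvd_prime_pow hp).mp hdvd
    exact ⟨j, hj⟩

/-- Lift a list of elements of `G` that admit preimages in `N` satisfying `P`. -/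
lemma lift_list (N : Subgroup G) (P : ↥N → Prop) :
    ∀ l : List G, (∀ g ∈ l, ∃ y : ↥N, (y : G) = g ∧ P y) →
      ∃ l' : List ↥N, (l'.map (N.subtype)).prod = l.prod ∧ ∀ y ∈ l', P y := by
  intro l
  induction l with
  | nil => exact fun _ => ⟨[], by simp, by simp⟩
  | cons a l ih =>
    intro hl
    obtain ⟨y, hy, hPy⟩ := hl a (by simp)
    obtain ⟨l', hl', hPl'⟩ := ih fun g hg => hl g (by simp [hg])
    refine ⟨y :: l', ?_, ?_⟩
    · rw [List.map_cons, List.prod_cons, List.prod_cons, hl', ← hy]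
      rfl
    · intro z hz
      rcases List.mem_cons.mp hz with h | h
      · rwa [h]
      · exact hPl' z h

end Aux

section Key

variable {G : Type*} [Group G] [Finite G] (N : Subgroup G) [hN : N.Normal]

/-- An element of `lcmFull N` of prime-power order lies in the Fitting subgroup:
its normal closure in `G` is a `p`-group. -/
lemma ppow_mem_fitting {p : ℕ} (hp : p.Prime) (x : ↥N) (hx : x ∈ lcmFull ↥N)
    {k : ℕ} (hord : orderOf x = p ^ k) : (x : G) ∈ fittingSubgroup G := by
  set H := Subgroup.normalClosure {(x : G)} with hH
  have hmem : ∀ g ∈ H, ∃ y : ↥N, (y : G) = g ∧ ∃ j, orderOf y = p ^ j := by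
    intro g hg
    have hg' : g ∈ Subgroup.closure (Group.conjugatesOfSet {(x : G)}) := hg
    rw [← Subgroup.mem_toSubmonoid, Subgroup.closure_toSubmonoid] at hg'
    obtain ⟨l, hl, hprod⟩ := Submonoid.exists_list_of_mem_closure hg'
    have hent : ∀ g' ∈ l, ∃ y : ↥N, (y : G) = g' ∧
        (y ∈ lcmFull ↥N ∧ ∃ j, orderOf y = p ^ j) := by
      intro g' hg'
      rcases hl g' hg' with h | h
      · obtain ⟨a, ha, hconj⟩ := Group.mem_conjugatesOfSet_iff.mp h
        rw [Set.mem_singleton_iff] at ha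
        subst ha
        obtain ⟨c, hc⟩ := isConj_iff.mp hconj
        refine ⟨MulAut.conjNormal c x, by rw [MulAut.conjNormal_apply]; exact hc, ?_, k, ?_⟩
        · exact lcmFull_mulEquiv (MulAut.conjNormal c) hx
        · rw [orderOf_mulEquiv]; exact hord
      · rw [Set.mem_inv] at h
        obtain ⟨a, ha, hconj⟩ := Group.mem_conjugatesOfSet_iff.mp h
        rw [Set.mem_singleton_iff] at ha
        subst ha
        obtain ⟨c, hc⟩ := isConj_iff.mp hconj
        refine ⟨MulAut.conjNormal c x⁻¹, ?_, ?_, k, ?_⟩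
        · rw [MulAut.conjNormal_apply]
          have h2 : g' = (c * (↑x : G) * c⁻¹)⁻¹ := by rw [hc, inv_inv]
          have h3 : ((x⁻¹ : ↥N) : G) = ((x : G))⁻¹ := rfl
          rw [h3, h2]
          group
        · exact lcmFull_mulEquiv (MulAut.conjNormal c) (lcmFull_inv hx)
        · rw [orderOf_mulEquiv, orderOf_inv]; exact hord
    obtain ⟨l', hl'prod, hl'P⟩ := lift_list N _ l hent
    obtain ⟨j, hj⟩ := list_prod_ppow hp l' hl'P
    refine ⟨l'.prod, ?_, j, hj⟩
    show N.subtype l'.prod = g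
    rw [map_list_prod, hl'prod, hprod]
  haveI : Fact p.Prime := ⟨hp⟩
  have hP : IsPGroup p ↥H := by
    intro g
    obtain ⟨y, hy, j, hj⟩ := hmem (g : G) g.2
    refine ⟨j, ?_⟩
    have h1 : (g : G) ^ p ^ j = 1 := by
      rw [← hy, ← SubgroupClass.coe_pow, ← hj, pow_orderOf_eq_one, OneMemClass.coe_one]
    exact Subtype.ext (by simpa using h1)
  have hnil : Group.IsNilpotent ↥H := hP.isNilpotent
  have hnorm : H.Normal := Subgroup.normalClosure_normal
  have hle : H ≤ fittingSubgroup G :=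
    le_iSup_of_le H (le_iSup_of_le hnorm (le_iSup_of_le hnil le_rfl))
  exact hle (Subgroup.subset_normalClosure (Set.mem_singleton _))

/-- Every element of `lcmFull N` lies in the Fitting subgroup of `G`. -/
lemma lcmFull_mem_fitting : ∀ n : ℕ, ∀ x : ↥N, orderOf x ≤ n → x ∈ lcmFull ↥N →
    (x : G) ∈ fittingSubgroup G := by
  intro n
  induction n using Nat.strong_induction_on with
  | _ n ih =>
    intro x hxn hx
    have hm0 : 0 < orderOf x := orderOf_pos x
    by_cases h1 : orderOf x = 1
    · have hx1 : x = 1 := orderOf_eq_one_iff.mp h1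
      rw [hx1]
      simpa using (fittingSubgroup G).one_mem
    · set p := (orderOf x).minFac with hpdef
      have hp : p.Prime := Nat.minFac_prime h1
      set a := p ^ (orderOf x).factorization p with ha
      set b := orderOf x / a with hb
      have hadvd : a ∣ orderOf x := Nat.ordProj_dvd (orderOf x) p
      have hab : a * b = orderOf x := Nat.ordProj_mul_ordCompl_eq_self (orderOf x) p
      have hco : Nat.Coprime a b :=
        Nat.Coprime.pow_left _ (Nat.coprime_ordCompl hp hm0.ne')
      have hfpos : 0 < (orderOf x).factorization p :=
        Nat.Prime.factorization_pos_of_dvd hp hm0.ne' (Nat.minFac_dvd (orderOf x))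
      have ha1 : 1 < a := Nat.one_lt_pow hfpos.ne' hp.one_lt
      have hbpos : 0 < b := by
        rcases Nat.eq_zero_or_pos b with h | h
        · rw [h, mul_zero] at hab; omega
        · exact h
      by_cases hb1 : b = 1
      · rw [hb1, mul_one] at hab
        exact ppow_mem_fitting N hp x hx hab.symm
      · have hblt : b < orderOf x := by nlinarith [hab]
        obtain ⟨u, v, huv⟩ := Nat.isCoprime_iff_coprime.mpr hco
        have hxsplit : x = x ^ (u * (a : ℤ)) * x ^ (v * (b : ℤ)) := by
          rw [← zpow_add, huv, zpow_one]
        -- second factor has p-power order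
        have hworder : orderOf (x ^ (v * (b : ℤ))) ∣ p ^ (orderOf x).factorization p := by
          rw [← ha]
          apply orderOf_dvd_of_pow_eq_one
          rw [← zpow_natCast (x ^ (v * (b : ℤ))) a, ← zpow_mul]
          have heq : v * (b : ℤ) * (a : ℤ) = (orderOf x : ℤ) * v := by
            push_cast [← hab]; ring
          rw [heq, zpow_mul, zpow_natCast, pow_orderOf_eq_one, one_zpow]
        obtain ⟨j, _, hj⟩ := (Nat.dvd_prime_pow hp).mp hworder
        have hwmem : ((x ^ (v * (b : ℤ)) : ↥N) : G) ∈ fittingSubgroup G :=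
          ppow_mem_fitting N hp _ (lcmFull_zpow hx _) hj
        -- first factor has order dividing b < orderOf x
        have hyorder : orderOf (x ^ (u * (a : ℤ))) ∣ b := by
          apply orderOf_dvd_of_pow_eq_one
          rw [← zpow_natCast (x ^ (u * (a : ℤ))) b, ← zpow_mul]
          have heq : u * (a : ℤ) * (b : ℤ) = (orderOf x : ℤ) * u := by
            push_cast [← hab]; ring
          rw [heq, zpow_mul, zpow_natCast, pow_orderOf_eq_one, one_zpow]
        have hymem : ((x ^ (u * (a : ℤ)) : ↥N) : G) ∈ fittingSubgroup G := by
          refine ih b (lt_of_lt_of_le hblt hxn) _ (Nat.le_of_dvd hbpos hyorder)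
            (lcmFull_zpow hx _)
        rw [hxsplit]
        push_cast
        exact mul_mem hymem hwmem

end Key

/-- If `N` is a normal subgroup of a finite group `G`, then `LC(N) ≤ Fit(G)`. -/
theorem LC_normal_le_fitting (G : Type*) [Group G] [Finite G]
    (N : Subgroup G) (hN : N.Normal) :
    (LC N).map N.subtype ≤ fittingSubgroup G := by
  haveI := hN
  rw [Subgroup.map_le_iff_le_comap, LC, Subgroup.closure_le]
  intro x hx
  exact lcmFull_mem_fitting N (orderOf x) x le_rfl hx
end

section
/- Let G be a finite group with h(G) conjugacy classes. Then Deg(G) = |G|·(h(G) + 1) if and only if G is abelian. -/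
/-- The degree of a vertex `g` in the LCM-graph of `G`: `g` is adjacent to `y` exactly
when `o(gy) ∣ lcm(o(g), o(y))`, and the loop at `g` contributes `2` to the degree. -/
noncomputable def degLCM {G : Type*} [Group G] (g : G) : ℕ :=
  1 + Nat.card {y : G // orderOf (g * y) ∣ Nat.lcm (orderOf g) (orderOf y)}

/-- `Deg G`: the sum of the degrees of all vertices of the LCM-graph of `G`. -/
noncomputable def DegLCM (G : Type*) [Group G] : ℕ := ∑ᶠ g : G, degLCM g

section Aux

variable {G : Type*} [Group G] [Finite G]

omit [Finite G] in
private lemma orderOf_conj' (x g : G) : orderOf (g * x * g⁻¹) = orderOf x := by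
  have := orderOf_injective (MulAut.conj g).toMonoidHom (MulEquiv.injective _) x
  simpa using this

/-- Decompose an element of non-prime-power order as a product of two elements of
strictly smaller order (which are powers of it). -/
private lemma decomp (x : G) (h1 : orderOf x ≠ 1) (hpp : ¬ IsPrimePow (orderOf x)) :
    ∃ u v : G, x = u * v ∧ orderOf u < orderOf x ∧ orderOf v < orderOf x := by
  have hn0 : orderOf x ≠ 0 := (orderOf_pos x).ne'
  set n := orderOf x with hn
  set p := n.minFac with hpdef
  have hp : p.Prime := Nat.minFac_prime h1
  set a := n.factorization p with hadef
  have hapos : 0 < a := hp.factorization_pos_of_dvd hn0 (Nat.minFac_dvd n)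
  set A := p ^ a with hAdef
  set B := n / p ^ a with hBdef
  have hAB : A * B = n := Nat.ordProj_mul_ordCompl_eq_self n p
  have hA1 : 1 < A := Nat.one_lt_pow hapos.ne' hp.one_lt
  have hB0 : B ≠ 0 := by
    intro h
    rw [h, mul_zero] at hAB
    exact hn0 hAB.symm
  have hB1 : 1 < B := by
    rcases Nat.lt_or_ge B 2 with h | h
    · rcases Nat.le_one_iff_eq_zero_or_eq_one.mp (Nat.lt_succ_iff.mp h) with h0 | h01
      · exact absurd h0 hB0
      · rw [h01, mul_one] at hAB
        exact absurd ⟨p, a, hp.prime, hapos, hAB⟩ hpp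
    · exact h
  have hco : A.Coprime B := Nat.Coprime.pow_left _ (Nat.coprime_ordCompl hp hn0)
  obtain ⟨s, hs⟩ := Nat.chineseRemainder hco 1 0
  obtain ⟨t, ht⟩ := Nat.chineseRemainder hco 0 1
  have hA0 : 0 < A := zero_lt_one.trans hA1
  refine ⟨x ^ s, x ^ t, ?_, ?_, ?_⟩
  · have hmod : s + t ≡ 1 [MOD n] := by
      rw [← hAB]
      exact (Nat.modEq_and_modEq_iff_modEq_mul hco).mp
        ⟨by simpa using hs.1.add ht.1, by simpa using hs.2.add ht.2⟩
    have : x ^ (s + t) = x ^ 1 := pow_eq_pow_iff_modEq.mpr hmod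
    rw [← pow_add, this, pow_one]
  · have hdvd : orderOf (x ^ s) ∣ A := by
      apply orderOf_dvd_of_pow_eq_one
      rw [← pow_mul]
      apply orderOf_dvd_iff_pow_eq_one.mp
      rw [← hn, ← hAB]
      obtain ⟨c, hc⟩ := (Nat.modEq_zero_iff_dvd).mp hs.2
      exact ⟨c, by rw [hc]; ring⟩
    calc orderOf (x ^ s) ≤ A := Nat.le_of_dvd hA0 hdvd
      _ < n := by rw [← hAB]; exact (Nat.lt_mul_iff_one_lt_right hA0).mpr hB1
  · have hdvd : orderOf (x ^ t) ∣ B := by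
      apply orderOf_dvd_of_pow_eq_one
      rw [← pow_mul]
      apply orderOf_dvd_iff_pow_eq_one.mp
      rw [← hn, ← hAB]
      obtain ⟨c, hc⟩ := (Nat.modEq_zero_iff_dvd).mp ht.1
      exact ⟨c, by rw [hc]; ring⟩
    calc orderOf (x ^ t) ≤ B := Nat.le_of_dvd (Nat.pos_of_ne_zero hB0) hdvd
      _ < n := by rw [← hAB]; exact Nat.lt_mul_iff_one_lt_left (Nat.pos_of_ne_zero hB0) |>.mpr hA1

private lemma primePow_commute (H : ∀ x w : G, orderOf w ∣ orderOf x → Commute x w)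
    {x y : G} (hx : IsPrimePow (orderOf x)) (hy : IsPrimePow (orderOf y)) :
    Commute x y := by
  obtain ⟨p, a, hp, ha, hpa⟩ := hx
  obtain ⟨q, b, hq, hb, hqb⟩ := hy
  have hp' : p.Prime := hp.nat_prime
  have hq' : q.Prime := hq.nat_prime
  by_cases hpq : p = q
  · subst hpq
    rcases le_total a b with h | h
    · exact (H y x (by rw [← hpa, ← hqb]; exact pow_dvd_pow p h)).symm
    · exact H x y (by rw [← hpa, ← hqb]; exact pow_dvd_pow p h)
  · have e1 : orderOf x⁻¹ = p ^ a := by rw [orderOf_inv]; exact hpa.symm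
    have e2 : orderOf (y⁻¹ * x * y) = p ^ a := by
      have : y⁻¹ * x * y = y⁻¹ * x * (y⁻¹)⁻¹ := by group
      rw [this, orderOf_conj']; exact hpa.symm
    have f1 : orderOf y = q ^ b := hqb.symm
    have f2 : orderOf (x⁻¹ * y⁻¹ * x) = q ^ b := by
      have : x⁻¹ * y⁻¹ * x = x⁻¹ * y⁻¹ * (x⁻¹)⁻¹ := by group
      rw [this, orderOf_conj', orderOf_inv]; exact hqb.symm
    have h1 : orderOf (x⁻¹ * (y⁻¹ * x * y)) ∣ p ^ a := by
      have hcomm : Commute x⁻¹ (y⁻¹ * x * y) := H _ _ (by rw [e1, e2])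
      have := hcomm.orderOf_mul_dvd_lcm
      rwa [e1, e2, Nat.lcm_self] at this
    have h2 : orderOf (x⁻¹ * (y⁻¹ * x * y)) ∣ q ^ b := by
      have hre : x⁻¹ * (y⁻¹ * x * y) = (x⁻¹ * y⁻¹ * x) * y := by group
      have hcomm : Commute (x⁻¹ * y⁻¹ * x) y := H _ _ (by rw [f1, f2])
      have := hcomm.orderOf_mul_dvd_lcm
      rw [f1, f2, Nat.lcm_self] at this
      rwa [hre]
    have hco : Nat.Coprime (p ^ a) (q ^ b) :=
      ((Nat.coprime_primes hp' hq').mpr hpq).pow a b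
    have hone : orderOf (x⁻¹ * (y⁻¹ * x * y)) = 1 :=
      Nat.eq_one_of_dvd_one (hco ▸ Nat.dvd_gcd h1 h2)
    have hc1 : x⁻¹ * (y⁻¹ * x * y) = 1 := orderOf_eq_one_iff.mp hone
    have h3 : x = y⁻¹ * x * y := inv_mul_eq_one.mp hc1
    have h4 : y * x = x * y := by
      have := congrArg (fun z => y * z) h3
      simpa [mul_assoc] using this
    exact h4.symm

private lemma commute_primePow_right (H : ∀ x w : G, orderOf w ∣ orderOf x → Commute x w) :
    ∀ (n : ℕ) (x y : G), orderOf x = n → IsPrimePow (orderOf y) → Commute x y := by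
  intro n
  induction n using Nat.strong_induction_on with
  | _ n ih =>
    intro x y hx hy
    by_cases h1 : orderOf x = 1
    · rw [orderOf_eq_one_iff] at h1
      rw [h1]; exact Commute.one_left y
    by_cases hpp : IsPrimePow (orderOf x)
    · exact primePow_commute H hpp hy
    · obtain ⟨u, v, hxuv, hu, hv⟩ := decomp x h1 hpp
      subst hx
      rw [hxuv]
      exact (ih _ hu u y rfl hy).mul_left (ih _ hv v y rfl hy)

private lemma commute_all (H : ∀ x w : G, orderOf w ∣ orderOf x → Commute x w) :
    ∀ (n : ℕ) (x y : G), orderOf y = n → Commute x y := by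
  intro n
  induction n using Nat.strong_induction_on with
  | _ n ih =>
    intro x y hy
    by_cases h1 : orderOf y = 1
    · rw [orderOf_eq_one_iff] at h1
      rw [h1]; exact Commute.one_right x
    by_cases hpp : IsPrimePow (orderOf y)
    · exact commute_primePow_right H (orderOf x) x y rfl hpp
    · obtain ⟨u, v, hyuv, hu, hv⟩ := decomp y h1 hpp
      subst hy
      rw [hyuv]
      exact (ih _ hu x u rfl).mul_right (ih _ hv x v rfl)

end Aux

/-- A finite group `G` with `h(G)` conjugacy classes satisfies
`Deg(G) = |G| * (h(G) + 1)` if and only if `G` is abelian. -/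
theorem DegLCM_eq_iff_abelian (G : Type*) [Group G] [Finite G] :
    DegLCM G = Nat.card G * (Nat.card (ConjClasses G) + 1) ↔
      ∀ a b : G, a * b = b * a := by
  classical
  cases nonempty_fintype G
  set P : G → G → Prop := fun g y => orderOf (g * y) ∣ Nat.lcm (orderOf g) (orderOf y) with hP
  set A : Finset (G × G) := Finset.univ.filter (fun p => P p.1 p.2) with hAdef
  set C : Finset (G × G) := Finset.univ.filter (fun p => Commute p.1 p.2) with hCdef
  have hCA : C ⊆ A := by
    intro p hp
    rw [hCdef, Finset.mem_filter] at hp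
    rw [hAdef, Finset.mem_filter]
    exact ⟨Finset.mem_univ _, hp.2.orderOf_mul_dvd_lcm⟩
  have hAcard : A.card = ∑ g : G, Nat.card {y : G // P g y} := by
    rw [hAdef, ← Fintype.card_subtype]
    rw [Fintype.card_congr (Equiv.subtypeProdEquivSigmaSubtype P), Fintype.card_sigma]
    simp [Nat.card_eq_fintype_card]
  have hDeg : DegLCM G = Fintype.card G + A.card := by
    rw [DegLCM, finsum_eq_sum_of_fintype]
    simp only [degLCM]
    rw [Finset.sum_add_distrib, Finset.sum_const, Finset.card_univ, smul_eq_mul, mul_one, hAcard]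
  have hCcard : C.card = Nat.card (ConjClasses G) * Nat.card G := by
    rw [hCdef, ← card_comm_eq_card_conjClasses_mul_card G, Nat.card_eq_fintype_card,
      Fintype.card_subtype]
  have hNatG : Nat.card G = Fintype.card G := Nat.card_eq_fintype_card
  have hrhs : Nat.card G * (Nat.card (ConjClasses G) + 1) = C.card + Fintype.card G := by
    rw [hCcard, hNatG]; ring
  constructor
  · intro h
    have hAC : A.card = C.card := by
      rw [hDeg, hrhs] at h
      omega
    have hCeqA : C = A := Finset.eq_of_subset_of_card_le hCA (le_of_eq hAC)
    have H0 : ∀ x y : G, P x y → Commute x y := by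
      intro x y hxy
      have hmem : (x, y) ∈ A := by
        rw [hAdef, Finset.mem_filter]; exact ⟨Finset.mem_univ _, hxy⟩
      rw [← hCeqA, hCdef, Finset.mem_filter] at hmem
      exact hmem.2
    have H : ∀ x w : G, orderOf w ∣ orderOf x → Commute x w := by
      intro x w hdvd
      have hadj : P x (x⁻¹ * w) := by
        show orderOf (x * (x⁻¹ * w)) ∣ _
        rw [mul_inv_cancel_left]
        exact hdvd.trans (Nat.dvd_lcm_left _ _)
      have hcomm := H0 x (x⁻¹ * w) hadj
      have h2 : Commute x (x * (x⁻¹ * w)) := (Commute.refl x).mul_right hcomm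
      rwa [mul_inv_cancel_left] at h2
    exact fun a b => commute_all H (orderOf b) a b rfl
  · intro hab
    have hA : A = Finset.univ := by
      apply Finset.eq_univ_iff_forall.mpr
      intro p
      rw [hAdef, Finset.mem_filter]
      exact ⟨Finset.mem_univ _, (show Commute p.1 p.2 from hab _ _).orderOf_mul_dvd_lcm⟩
    have hC : C = Finset.univ := by
      apply Finset.eq_univ_iff_forall.mpr
      intro p
      rw [hCdef, Finset.mem_filter]
      exact ⟨Finset.mem_univ _, hab _ _⟩
    rw [hDeg, hrhs, hA, hC]
    omega
end
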